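/- arXiv:2409.15708 — 3 statements merged into one kernel-verified Lean document; each statement's English description precedes it below -/
import Mathlib

section
/- Let (H, Ẋ, Λ) be a dataset with n ≥ n_h and tr(Λ) > 0, let HΛ^{1/2} = U S V⊤ be a singular value decomposition (U ∈ ℝ^{n_h×n_h} and V ∈ ℝ^{n×n} orthogonal, S ∈ ℝ^{n_h×n}), and define H_s := (n_h/tr(Λ))^{1/2} U (S S⊤)^{1/2} and Ẋ_s := (n_h/tr(Λ))^{1/2} Ẋ Λ^{1/2} V [I_{n_h} 0]⊤. Then Ξ(H_s, Ẋ_s, (tr(Λ)/n_h) I_{n_h}) − Ξ(H, Ẋ, Λ) equals the block-diagonal matrix diag( Ẋ Λ^{1/2} V diag(0_{n_h}, I_{n−n_h}) V⊤ Λ^{1/2} Ẋ⊤ , 0_{n_h×n_h} ); in particular this difference is positive semidefinite. -/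
/-!
Write `L = Λ^{1/2}` and `HL = USVᵀ` with `S = diag(σ) Pᵀ`, where `P = [I_{n_h} 0]ᵀ`.
Since `PᵀP = I`, `SSᵀ = diag(σ)²`, so the positive semidefinite square root of `SSᵀ` is
`diag(σ)`. The scalings cancel (`√(n_h/tr Λ)² · tr Λ/n_h = 1`, and the new weight has the same
trace), so `Ẋ_s Λ_s H_sᵀ = ẊLVSᵀUᵀ = ẊΛHᵀ` and `H_s Λ_s H_sᵀ = U diag(σ)² Uᵀ = HΛHᵀ`. Only the
upper left block changes, by `ẊΛẊᵀ - ẊLVPPᵀVᵀLẊᵀ = ẊLV(I - PPᵀ)VᵀLẊᵀ` (as `VVᵀ = I`), and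
`I - PPᵀ = diag(0, I_{n-n_h})` is a projection, so this block is a Gram matrix.
-/

open Matrix

/-- The symmetric data matrix
`Ξ(H, Ẋ, Λ) := [[tr(Λ)δ I_{n_x} − ẊΛẊᵀ, ẊΛHᵀ],[HΛẊᵀ, −HΛHᵀ]]`. -/
noncomputable def XiMat {k : Type*} [Fintype k] (n_x n_h : ℕ) (δ : ℝ)
    (H : Matrix (Fin n_h) k ℝ) (Xd : Matrix (Fin n_x) k ℝ) (Λ : Matrix k k ℝ) :
    Matrix (Fin n_x ⊕ Fin n_h) (Fin n_x ⊕ Fin n_h) ℝ :=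
  Matrix.fromBlocks ((Matrix.trace Λ * δ) • 1 - Xd * Λ * Xdᵀ) (Xd * Λ * Hᵀ)
    (H * Λ * Xdᵀ) (-(H * Λ * Hᵀ))

namespace Matrix

variable {R : Type*}

/- `rectId n m` is the paper's `[I_m 0]ᵀ` (for `m ≤ n`) and `tailProj k n` is
`diag(0_k, I_{n-k})`. -/
def rectId [Zero R] [One R] (m n : ℕ) : Matrix (Fin m) (Fin n) R :=
  of fun i j => if (i : ℕ) = j then 1 else 0

def tailProj [Zero R] [One R] (k n : ℕ) : Matrix (Fin n) (Fin n) R :=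
  of fun i j => if i = j ∧ k ≤ (i : ℕ) then 1 else 0

theorem rectId_transpose [Zero R] [One R] (m n : ℕ) :
    (rectId m n : Matrix (Fin m) (Fin n) R)ᵀ = rectId n m := by
  ext i j
  simp [rectId, eq_comm]

theorem of_ite_eq_diagonal_mul_rectId [Semiring R] {m n : ℕ} (σ : Fin m → R) :
    (of fun (i : Fin m) (j : Fin n) => if (j : ℕ) = i then σ i else 0) =
      diagonal σ * (rectId m n : Matrix (Fin m) (Fin n) R) := by
  refine Matrix.ext fun i j => ?_
  simp [rectId, diagonal_mul, eq_comm]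

theorem tailProj_eq_diagonal [Zero R] [One R] (k n : ℕ) :
    (tailProj k n : Matrix (Fin n) (Fin n) R) =
      diagonal fun i : Fin n => if k ≤ (i : ℕ) then 1 else 0 := by
  ext i j
  by_cases h : i = j
  · subst h; simp [tailProj]
  · simp [tailProj, h]

theorem posSemidef_tailProj [CommRing R] [PartialOrder R] [StarRing R] [StarOrderedRing R]
    [ZeroLEOneClass R] (k n : ℕ) :
    (tailProj k n : Matrix (Fin n) (Fin n) R).PosSemidef := by
  rw [tailProj_eq_diagonal, posSemidef_diagonal_iff]
  intro i
  split_ifs <;> simp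

theorem rectId_mul_rectId [Semiring R] (m n : ℕ) :
    (rectId m n : Matrix (Fin m) (Fin n) R) * (rectId n m : Matrix (Fin n) (Fin m) R) =
      diagonal fun i : Fin m => if (i : ℕ) < n then (1 : R) else 0 := by
  refine Matrix.ext fun i j => ?_
  rw [Matrix.mul_apply, diagonal_apply]
  simp only [rectId, of_apply, ite_mul, one_mul, zero_mul]
  by_cases hi : (i : ℕ) < n
  · rw [Finset.sum_eq_single ⟨i, hi⟩ (fun k _ hk => if_neg fun h => hk (Fin.ext h.symm))
      (by simp)]
    simp [hi, Fin.ext_iff]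
  · rw [Finset.sum_eq_zero fun (k : Fin n) _ => if_neg fun (h : (i : ℕ) = k) => hi (h ▸ k.isLt)]
    simp [hi]

theorem rectId_mul_rectId_of_le [Semiring R] {m n : ℕ} (h : m ≤ n) :
    (rectId m n : Matrix (Fin m) (Fin n) R) * (rectId n m : Matrix (Fin n) (Fin m) R) = 1 := by
  rw [rectId_mul_rectId, ← diagonal_one]
  congr 1; ext i
  simp [show (i : ℕ) < n by omega]

theorem rectId_mul_rectId_eq_one_sub_tailProj [Ring R] (m n : ℕ) :
    (rectId m n : Matrix (Fin m) (Fin n) R) * (rectId n m : Matrix (Fin n) (Fin m) R) =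
      1 - (tailProj n m : Matrix (Fin m) (Fin m) R) := by
  rw [rectId_mul_rectId, tailProj_eq_diagonal, ← diagonal_one, diagonal_sub]
  congr 1; ext i
  split_ifs <;> first | omega | simp

open scoped ComplexOrder in
theorem PosSemidef.eq_of_mul_self_eq_mul_self {𝕜 n : Type*} [RCLike 𝕜] [Fintype n] [DecidableEq n]
    {A B : Matrix n n 𝕜} (hA : A.PosSemidef) (hB : B.PosSemidef) (h : A * A = B * B) : A = B := by
  open scoped MatrixOrder Matrix.Norms.L2Operator in
  exact (CFC.sqrt_unique h hA.nonneg).symm.trans (CFC.sqrt_unique rfl hB.nonneg)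

theorem PosSemidef.fromBlocks_zero {R m n : Type*} [CommRing R] [PartialOrder R] [StarRing R]
    [Fintype m] [Fintype n] [DecidableEq m] {A : Matrix m m R} (hA : A.PosSemidef) :
    (fromBlocks A 0 0 (0 : Matrix n n R)).PosSemidef := by
  convert hA.mul_mul_conjTranspose_same (fromRows (1 : Matrix m m R) (0 : Matrix n m R)) using 1
  rw [fromRows_mul, conjTranspose_fromRows_eq_fromCols_conjTranspose, fromRows_mul_fromCols]
  simp

theorem smul_mul_smul_one_mul_transpose_smul {R l m n : Type*} [CommRing R] [Fintype n]
    [DecidableEq n] (r c : R) (A : Matrix l n R) (B : Matrix m n R) :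
    (r • A) * (c • 1 : Matrix n n R) * (r • B)ᵀ = (r * c * r) • (A * Bᵀ) := by
  simp only [transpose_smul, Matrix.mul_smul, Matrix.smul_mul, Matrix.mul_one, smul_smul, mul_assoc]

end Matrix

theorem XiMat_sub_XiMat_of_eq {k k' : Type*} [Fintype k] [Fintype k'] {n_x n_h : ℕ} (δ : ℝ)
    {H : Matrix (Fin n_h) k ℝ} {X : Matrix (Fin n_x) k ℝ} {Λ : Matrix k k ℝ}
    {H' : Matrix (Fin n_h) k' ℝ} {X' : Matrix (Fin n_x) k' ℝ} {Λ' : Matrix k' k' ℝ}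
    (hΛ : Λᵀ = Λ) (hΛ' : Λ'ᵀ = Λ') (htr : trace Λ' = trace Λ)
    (hXH : X' * Λ' * H'ᵀ = X * Λ * Hᵀ) (hHH : H' * Λ' * H'ᵀ = H * Λ * Hᵀ) :
    XiMat n_x n_h δ H' X' Λ' - XiMat n_x n_h δ H X Λ =
      fromBlocks (X * Λ * Xᵀ - X' * Λ' * X'ᵀ) 0 0 0 := by
  have hHX : H' * Λ' * X'ᵀ = H * Λ * Xᵀ := by
    simpa [transpose_mul, hΛ, hΛ', Matrix.mul_assoc] using congrArg transpose hXH
  rw [XiMat, XiMat, sub_eq_add_neg, fromBlocks_neg, fromBlocks_add, htr, hXH, hHX, hHH]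
  congr 1 <;> abel

theorem XiMat_rescaled_svd_sub_XiMat {n_x n_h n : ℕ} (δ : ℝ) (hnh : n_h ≠ 0) (hn : n_h ≤ n)
    (H : Matrix (Fin n_h) (Fin n) ℝ) (X : Matrix (Fin n_x) (Fin n) ℝ) {l : Fin n → ℝ}
    (hl : ∀ i, 0 ≤ l i) (ht : 0 < trace (diagonal l)) (U : Matrix (Fin n_h) (Fin n_h) ℝ)
    {V : Matrix (Fin n) (Fin n) ℝ} (hV : Vᵀ * V = 1) (hV' : V * Vᵀ = 1) (σ : Fin n_h → ℝ)
    (hSVD : H * diagonal (fun i => √(l i)) =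
      U * (diagonal σ * (rectId n_h n : Matrix (Fin n_h) (Fin n) ℝ)) * Vᵀ) :
    XiMat n_x n_h δ (√((n_h : ℝ) / trace (diagonal l)) • (U * diagonal σ))
        (√((n_h : ℝ) / trace (diagonal l)) •
          (X * diagonal (fun i => √(l i)) * V * (rectId n n_h : Matrix (Fin n) (Fin n_h) ℝ)))
        ((trace (diagonal l) / (n_h : ℝ)) • 1) -
      XiMat n_x n_h δ H X (diagonal l) =
    fromBlocks (X * diagonal (fun i => √(l i)) * V * (tailProj n_h n : Matrix (Fin n) (Fin n) ℝ) *
      Vᵀ * diagonal (fun i => √(l i)) * Xᵀ) 0 0 0 := by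
  set t := trace (diagonal l)
  set L := diagonal fun i => √(l i)
  have hL : Lᵀ = L := diagonal_transpose _
  have hLL : L * L = diagonal l := by
    rw [diagonal_mul_diagonal]
    exact congrArg diagonal (funext fun i => Real.mul_self_sqrt (hl i))
  have hnh' : (n_h : ℝ) ≠ 0 := Nat.cast_ne_zero.mpr hnh
  have hscale : √((n_h : ℝ) / t) * (t / n_h) * √((n_h : ℝ) / t) = 1 := by
    rw [mul_right_comm, Real.mul_self_sqrt (by positivity)]
    field_simp
  have htr : trace ((t / n_h) • 1 : Matrix (Fin n_h) (Fin n_h) ℝ) = t := by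
    rw [trace_smul, trace_one, Fintype.card_fin, smul_eq_mul, div_mul_cancel₀ t hnh']
  have hΛ : ∀ {k : ℕ} (A : Matrix (Fin k) (Fin n) ℝ) (B : Matrix (Fin n_h) (Fin n) ℝ),
      A * diagonal l * Bᵀ = A * L * (B * L)ᵀ := by
    intro k A B
    rw [transpose_mul, hL, ← hLL, Matrix.mul_assoc A L, Matrix.mul_assoc A (L * L),
      Matrix.mul_assoc L]
  have hHLt : (H * L)ᵀ = V * (rectId n n_h : Matrix (Fin n) (Fin n_h) ℝ) * (U * diagonal σ)ᵀ := by
    rw [hSVD]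
    simp only [transpose_mul, transpose_transpose, diagonal_transpose, rectId_transpose,
      Matrix.mul_assoc]
  have hΛH : X * diagonal l * Hᵀ =
      X * L * V * (rectId n n_h : Matrix (Fin n) (Fin n_h) ℝ) * (U * diagonal σ)ᵀ := by
    rw [hΛ, hHLt]
    simp only [Matrix.mul_assoc]
  have hHΛH : H * diagonal l * Hᵀ = U * diagonal σ * (U * diagonal σ)ᵀ := by
    rw [hΛ, hHLt, hSVD]
    simp only [Matrix.mul_assoc]
    rw [← Matrix.mul_assoc Vᵀ, hV, Matrix.one_mul,
      ← Matrix.mul_assoc (rectId n_h n), rectId_mul_rectId_of_le hn, Matrix.one_mul]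
  have hXΛX : X * diagonal l * Xᵀ = X * L * V * Vᵀ * L * Xᵀ := by
    rw [Matrix.mul_assoc X L V, Matrix.mul_assoc X (L * V), Matrix.mul_assoc L V, hV',
      Matrix.mul_one, ← hLL, Matrix.mul_assoc X L L]
  rw [XiMat_sub_XiMat_of_eq δ (diagonal_transpose l) (by simp) htr
    (by rw [smul_mul_smul_one_mul_transpose_smul, hscale, one_smul, hΛH])
    (by rw [smul_mul_smul_one_mul_transpose_smul, hscale, one_smul, hHΛH]),
    smul_mul_smul_one_mul_transpose_smul, hscale, one_smul, hXΛX]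
  congr 1
  simp only [transpose_mul, hL, Matrix.mul_assoc]
  rw [← Matrix.mul_assoc (rectId n n_h), rectId_transpose, rectId_mul_rectId_eq_one_sub_tailProj]
  simp only [Matrix.sub_mul, Matrix.one_mul, Matrix.mul_sub, sub_sub_cancel]

theorem stmt1_general (n_x n_u n : ℕ) (hx : 0 < n_x)
    (hn : n_x + n_u ≤ n) (δ : ℝ)
    (H : Matrix (Fin (n_x + n_u)) (Fin n) ℝ) (Xd : Matrix (Fin n_x) (Fin n) ℝ)
    (l : Fin n → ℝ) (hl : ∀ i, 0 ≤ l i)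
    (htr : 0 < Matrix.trace (Matrix.diagonal l))
    (U : Matrix (Fin (n_x + n_u)) (Fin (n_x + n_u)) ℝ)
    (V : Matrix (Fin n) (Fin n) ℝ) (hV : Vᵀ * V = 1) (hV' : V * Vᵀ = 1)
    (σ : Fin (n_x + n_u) → ℝ) (hσ : ∀ i, 0 ≤ σ i)
    (S : Matrix (Fin (n_x + n_u)) (Fin n) ℝ)
    (hS : S = Matrix.of fun (i : Fin (n_x + n_u)) (j : Fin n) =>
      if (j : ℕ) = (i : ℕ) then σ i else 0)
    (hSVD : H * Matrix.diagonal (fun i => Real.sqrt (l i)) = U * S * Vᵀ)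
    (Ssq : Matrix (Fin (n_x + n_u)) (Fin (n_x + n_u)) ℝ)
    (hSsqPSD : Ssq.PosSemidef) (hSsq : Ssq * Ssq = S * Sᵀ) :
    XiMat n_x (n_x + n_u) δ
        (Real.sqrt (((n_x + n_u : ℕ) : ℝ) / Matrix.trace (Matrix.diagonal l)) • (U * Ssq))
        (Real.sqrt (((n_x + n_u : ℕ) : ℝ) / Matrix.trace (Matrix.diagonal l)) •
          (Xd * Matrix.diagonal (fun i => Real.sqrt (l i)) * V *
            Matrix.of fun (i : Fin n) (j : Fin (n_x + n_u)) =>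
              if (i : ℕ) = (j : ℕ) then (1 : ℝ) else 0))
        ((Matrix.trace (Matrix.diagonal l) / ((n_x + n_u : ℕ) : ℝ)) • 1) -
      XiMat n_x (n_x + n_u) δ H Xd (Matrix.diagonal l) =
    Matrix.fromBlocks
      (Xd * Matrix.diagonal (fun i => Real.sqrt (l i)) * V *
        (Matrix.of fun (i j : Fin n) =>
          if i = j ∧ (n_x + n_u) ≤ (i : ℕ) then (1 : ℝ) else 0) *
        Vᵀ * Matrix.diagonal (fun i => Real.sqrt (l i)) * Xdᵀ) 0 0 0 ∧
    (XiMat n_x (n_x + n_u) δ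
        (Real.sqrt (((n_x + n_u : ℕ) : ℝ) / Matrix.trace (Matrix.diagonal l)) • (U * Ssq))
        (Real.sqrt (((n_x + n_u : ℕ) : ℝ) / Matrix.trace (Matrix.diagonal l)) •
          (Xd * Matrix.diagonal (fun i => Real.sqrt (l i)) * V *
            Matrix.of fun (i : Fin n) (j : Fin (n_x + n_u)) =>
              if (i : ℕ) = (j : ℕ) then (1 : ℝ) else 0))
        ((Matrix.trace (Matrix.diagonal l) / ((n_x + n_u : ℕ) : ℝ)) • 1) -
      XiMat n_x (n_x + n_u) δ H Xd (Matrix.diagonal l)).PosSemidef := by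
  have hS' : S = diagonal σ * (rectId (n_x + n_u) n : Matrix (Fin (n_x + n_u)) (Fin n) ℝ) :=
    hS.trans (of_ite_eq_diagonal_mul_rectId σ)
  have hSsq' : Ssq = diagonal σ := by
    refine hSsqPSD.eq_of_mul_self_eq_mul_self (posSemidef_diagonal_iff.2 hσ) ?_
    rw [hSsq, hS', transpose_mul, diagonal_transpose, rectId_transpose, Matrix.mul_assoc,
      ← Matrix.mul_assoc (rectId _ _), rectId_mul_rectId_of_le hn, Matrix.one_mul]
  subst hSsq' hS'
  have hdiff := XiMat_rescaled_svd_sub_XiMat δ (by omega) hn H Xd hl htr U hV hV' σ hSVD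
  refine ⟨hdiff, hdiff ▸ PosSemidef.fromBlocks_zero ?_⟩
  simpa [conjTranspose_eq_transpose_of_trivial, transpose_mul, Matrix.mul_assoc] using
    (posSemidef_tailProj (n_x + n_u) n).mul_mul_conjTranspose_same
      (Xd * diagonal (fun i => √(l i)) * V)

/-- Let `(H, Ẋ, Λ)` be a dataset with `n ≥ n_h` and `tr(Λ) > 0`, let
`HΛ^{1/2} = USVᵀ` be a singular value decomposition (`U`, `V` orthogonal, `S`
rectangular diagonal with nonnegative singular values `σ`), let `Ssq` be the positive
semidefinite square root of `SSᵀ`, and define `H_s := (n_h/tr(Λ))^{1/2} U Ssq` and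
`Ẋ_s := (n_h/tr(Λ))^{1/2} Ẋ Λ^{1/2} V [I_{n_h} 0]ᵀ`. Then
`Ξ(H_s, Ẋ_s, (tr(Λ)/n_h) I) − Ξ(H, Ẋ, Λ)
  = diag(Ẋ Λ^{1/2} V diag(0_{n_h}, I_{n−n_h}) Vᵀ Λ^{1/2} Ẋᵀ, 0)`;
in particular the difference is positive semidefinite. -/
theorem stmt1 (n_x n_u n : ℕ) (hx : 0 < n_x) (hu : 0 < n_u)
    (hn : n_x + n_u ≤ n) (δ : ℝ) (hδ : 0 < δ)
    (H : Matrix (Fin (n_x + n_u)) (Fin n) ℝ) (Xd : Matrix (Fin n_x) (Fin n) ℝ)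
    (l : Fin n → ℝ) (hl : ∀ i, 0 ≤ l i)
    (htr : 0 < Matrix.trace (Matrix.diagonal l))
    (U : Matrix (Fin (n_x + n_u)) (Fin (n_x + n_u)) ℝ)
    (hU : Uᵀ * U = 1) (hU' : U * Uᵀ = 1)
    (V : Matrix (Fin n) (Fin n) ℝ) (hV : Vᵀ * V = 1) (hV' : V * Vᵀ = 1)
    (σ : Fin (n_x + n_u) → ℝ) (hσ : ∀ i, 0 ≤ σ i)
    (S : Matrix (Fin (n_x + n_u)) (Fin n) ℝ)
    (hS : S = Matrix.of fun (i : Fin (n_x + n_u)) (j : Fin n) =>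
      if (j : ℕ) = (i : ℕ) then σ i else 0)
    (hSVD : H * Matrix.diagonal (fun i => Real.sqrt (l i)) = U * S * Vᵀ)
    (Ssq : Matrix (Fin (n_x + n_u)) (Fin (n_x + n_u)) ℝ)
    (hSsqPSD : Ssq.PosSemidef) (hSsq : Ssq * Ssq = S * Sᵀ) :
    XiMat n_x (n_x + n_u) δ
        (Real.sqrt (((n_x + n_u : ℕ) : ℝ) / Matrix.trace (Matrix.diagonal l)) • (U * Ssq))
        (Real.sqrt (((n_x + n_u : ℕ) : ℝ) / Matrix.trace (Matrix.diagonal l)) •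
          (Xd * Matrix.diagonal (fun i => Real.sqrt (l i)) * V *
            Matrix.of fun (i : Fin n) (j : Fin (n_x + n_u)) =>
              if (i : ℕ) = (j : ℕ) then (1 : ℝ) else 0))
        ((Matrix.trace (Matrix.diagonal l) / ((n_x + n_u : ℕ) : ℝ)) • 1) -
      XiMat n_x (n_x + n_u) δ H Xd (Matrix.diagonal l) =
    Matrix.fromBlocks
      (Xd * Matrix.diagonal (fun i => Real.sqrt (l i)) * V *
        (Matrix.of fun (i j : Fin n) =>
          if i = j ∧ (n_x + n_u) ≤ (i : ℕ) then (1 : ℝ) else 0) *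
        Vᵀ * Matrix.diagonal (fun i => Real.sqrt (l i)) * Xdᵀ) 0 0 0 ∧
    (XiMat n_x (n_x + n_u) δ
        (Real.sqrt (((n_x + n_u : ℕ) : ℝ) / Matrix.trace (Matrix.diagonal l)) • (U * Ssq))
        (Real.sqrt (((n_x + n_u : ℕ) : ℝ) / Matrix.trace (Matrix.diagonal l)) •
          (Xd * Matrix.diagonal (fun i => Real.sqrt (l i)) * V *
            Matrix.of fun (i : Fin n) (j : Fin (n_x + n_u)) =>
              if (i : ℕ) = (j : ℕ) then (1 : ℝ) else 0))
        ((Matrix.trace (Matrix.diagonal l) / ((n_x + n_u : ℕ) : ℝ)) • 1) -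
      XiMat n_x (n_x + n_u) δ H Xd (Matrix.diagonal l)).PosSemidef :=
  stmt1_general n_x n_u n hx hn δ H Xd l hl htr U V hV hV' σ hσ S hS hSVD Ssq hSsqPSD hSsq
end

section
/- Let (H, Ẋ, Λ) be a dataset with HΛH⊤ ≻ 0, suppose n_h ≥ 2, and let h ∈ ℝ^{n_h} satisfy m := h⊤ (HΛH⊤)^{−1} h > n_h / tr(Λ). Then for every λ with 0 < λ ≤ (tr(Λ) m − n_h) / ((n_h − 1) m), setting H_+ := [H h] and Λ_+ := diag(Λ, λ), one has μ̂(H_+, Λ_+) < μ̂(H, Λ). -/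
/-! By the matrix determinant lemma, appending the column `h` with weight `λ` multiplies
`det(HΛHᵀ)` by `1 + λm`, while the trace grows from `T` to `T + λ`; so the claim reduces to
`(T + λ)^{n_h} < T^{n_h} (1 + λm)`. Bernoulli's inequality for
`(T / (T + λ))^{n_h} = (1 - λ / (T + λ))^{n_h}` gives
`(T - (n_h - 1)λ) (T + λ)^{n_h} < T^{n_h} (T + λ)`, and the bound on `λ` is exactly what makes
`T + λ ≤ (1 + λm) (T - (n_h - 1)λ)`. -/

open Matrix

/-- The volume bound `μ̂(H,Λ) := β (tr(Λ)δ)^{n_x n_h/2} det(HΛHᵀ)^{−n_x/2}`, where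
`n_h` is the number of rows of `H`. -/
noncomputable def muhat {m k : Type*} [Fintype m] [Fintype k] [DecidableEq m]
    (n_x : ℕ) (β δ : ℝ) (H : Matrix m k ℝ) (Λ : Matrix k k ℝ) : ℝ :=
  β * (Matrix.trace Λ * δ) ^ ((n_x * Fintype.card m : ℝ) / 2) *
    (H * Λ * Hᵀ).det ^ (-(n_x : ℝ) / 2)

lemma sub_mul_mul_add_pow_lt_pow_mul_add {T lam : ℝ} {k : ℕ} (hT : 0 ≤ T) (hlam : 0 < lam)
    (hk : 2 ≤ k) : (T - (k - 1) * lam) * (T + lam) ^ k < T ^ k * (T + lam) := by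
  have hs : 0 < T + lam := by linarith
  have hbern := one_add_mul_self_lt_rpow_one_add (s := -(lam / (T + lam)))
    (by rw [neg_le_neg_iff, div_le_one hs]; linarith) (neg_ne_zero.mpr (div_pos hlam hs).ne')
    (p := k) (by exact_mod_cast hk)
  rw [Real.rpow_natCast,
    show 1 + -(lam / (T + lam)) = T / (T + lam) by field_simp; ring,
    show 1 + (k : ℝ) * -(lam / (T + lam)) = (T - (k - 1) * lam) / (T + lam) by field_simp; ring,
    div_pow, div_lt_div_iff₀ hs (by positivity)] at hbern
  exact hbern

lemma add_pow_lt_pow_mul_one_add_mul {T lam m : ℝ} {k : ℕ} (hk : 2 ≤ k) (hlam : 0 < lam)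
    (hm : 0 < m) (hbound : lam * ((k - 1) * m) ≤ T * m - k) :
    (T + lam) ^ k < T ^ k * (1 + lam * m) := by
  have hk' : (2 : ℝ) ≤ k := by exact_mod_cast hk
  have hu : 0 < T - (k - 1) * lam := by
    refine pos_of_mul_pos_right (a := m) ?_ hm.le
    nlinarith
  have hT : 0 ≤ T := by nlinarith
  have hs : T + lam ≤ (1 + lam * m) * (T - (k - 1) * lam) := by
    nlinarith [mul_le_mul_of_nonneg_left hbound hlam.le]
  refine lt_of_mul_lt_mul_left ?_ hu.le
  calc (T - (k - 1) * lam) * (T + lam) ^ k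
      < T ^ k * (T + lam) := sub_mul_mul_add_pow_lt_pow_mul_add hT hlam hk
    _ ≤ T ^ k * ((1 + lam * m) * (T - (k - 1) * lam)) := by gcongr
    _ = (T - (k - 1) * lam) * (T ^ k * (1 + lam * m)) := by ring

lemma fromCols_replicateCol_mul_diagonal_mul_transpose {m k R : Type*} [Fintype k]
    [DecidableEq k] [CommSemiring R] (H : Matrix m k R) (l : k → R)
    (h : m → R) (lam : R) :
    fromCols H (replicateCol Unit h) * diagonal (Sum.elim l fun _ : Unit => lam) *
        (fromCols H (replicateCol Unit h))ᵀ =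
      H * diagonal l * Hᵀ + replicateCol Unit (lam • h) * replicateRow Unit h := by
  rw [← fromBlocks_diagonal, transpose_fromCols, fromCols_mul_fromBlocks, fromCols_mul_fromRows,
    transpose_replicateCol]
  have : replicateCol Unit h * diagonal (fun _ : Unit => lam) = replicateCol Unit (lam • h) := by
    ext i j
    simp [mul_comm]
  simp [this]

lemma det_add_replicateCol_mul_replicateRow_eq_dotProduct {m R ι : Type*} [Fintype m]
    [DecidableEq m] [CommRing R] [Unique ι]
    {A : Matrix m m R} (hA : IsUnit A.det) (u v : m → R) :
    (A + replicateCol ι u * replicateRow ι v).det = A.det * (1 + v ⬝ᵥ A⁻¹ *ᵥ u) := by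
  rw [det_add_replicateCol_mul_replicateRow hA, Matrix.mul_assoc, ← replicateCol_mulVec,
    det_unique (1 + _)]
  simp [replicateRow_mul_replicateCol_apply]

section Muhat

variable {m k k' : Type*} [Fintype m] [Fintype k] [Fintype k'] [DecidableEq m]

lemma muhat_eq_mul_rpow (n_x : ℕ) (β δ : ℝ) (H : Matrix m k ℝ) (Λ : Matrix k k ℝ)
    (htr : 0 ≤ trace Λ * δ) (hdet : 0 ≤ (H * Λ * Hᵀ).det) :
    muhat n_x β δ H Λ =
      β * ((trace Λ * δ) ^ Fintype.card m / (H * Λ * Hᵀ).det) ^ ((n_x : ℝ) / 2) := by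
  rw [muhat, Real.div_rpow (by positivity) hdet, ← Real.rpow_natCast, ← Real.rpow_mul htr,
    neg_div, Real.rpow_neg hdet, div_eq_mul_inv]
  ring_nf

lemma muhat_lt_muhat {n_x : ℕ} {β δ : ℝ} (hx : 0 < n_x) (hβ : 0 < β) (hδ : 0 < δ)
    {H : Matrix m k ℝ} {Λ : Matrix k k ℝ} {H' : Matrix m k' ℝ} {Λ' : Matrix k' k' ℝ}
    (htr : 0 ≤ trace Λ) (htr' : 0 ≤ trace Λ') (hdet : 0 < (H * Λ * Hᵀ).det)
    (hdet' : 0 < (H' * Λ' * H'ᵀ).det)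
    (hlt : trace Λ' ^ Fintype.card m * (H * Λ * Hᵀ).det <
      trace Λ ^ Fintype.card m * (H' * Λ' * H'ᵀ).det) :
    muhat n_x β δ H' Λ' < muhat n_x β δ H Λ := by
  rw [muhat_eq_mul_rpow _ _ _ _ _ (by positivity) hdet'.le,
    muhat_eq_mul_rpow _ _ _ _ _ (by positivity) hdet.le]
  refine mul_lt_mul_of_pos_left (Real.rpow_lt_rpow (by positivity) ?_ (by positivity)) hβ
  rw [div_lt_div_iff₀ hdet' hdet, mul_pow, mul_pow]
  have : 0 < δ ^ Fintype.card m := by positivity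
  nlinarith

end Muhat

theorem stmt3_general (n_x n_u n : ℕ) (hx : 0 < n_x) (hu : 0 < n_u)
    (β δ : ℝ) (hβ : 0 < β) (hδ : 0 < δ)
    (H : Matrix (Fin (n_x + n_u)) (Fin n) ℝ)
    (l : Fin n → ℝ) (hl : ∀ i, 0 ≤ l i)
    (hpd : (H * Matrix.diagonal l * Hᵀ).PosDef)
    (h : Fin (n_x + n_u) → ℝ)
    (hm : h ⬝ᵥ (H * Matrix.diagonal l * Hᵀ)⁻¹.mulVec h >
        ((n_x + n_u : ℕ) : ℝ) / Matrix.trace (Matrix.diagonal l))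
    (lam : ℝ) (hlam0 : 0 < lam)
    (hlam1 : lam ≤
        (Matrix.trace (Matrix.diagonal l) *
            (h ⬝ᵥ (H * Matrix.diagonal l * Hᵀ)⁻¹.mulVec h) - ((n_x + n_u : ℕ) : ℝ)) /
          ((((n_x + n_u : ℕ) : ℝ) - 1) *
            (h ⬝ᵥ (H * Matrix.diagonal l * Hᵀ)⁻¹.mulVec h))) :
    muhat n_x β δ (Matrix.fromCols H (Matrix.of fun i (_ : Unit) => h i))
        (Matrix.diagonal (Sum.elim l fun _ : Unit => lam)) <
      muhat n_x β δ H (Matrix.diagonal l) := by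
  set A := H * diagonal l * Hᵀ
  set m := h ⬝ᵥ A⁻¹ *ᵥ h
  set T := trace (diagonal l)
  have hT : 0 ≤ T := by
    simpa only [T, trace_diagonal] using Finset.sum_nonneg fun i _ => hl i
  have hm0 : 0 < m := (div_nonneg (Nat.cast_nonneg _) hT).trans_lt hm
  have hk : 2 ≤ n_x + n_u := by omega
  have hk' : (2 : ℝ) ≤ (n_x + n_u : ℕ) := by exact_mod_cast hk
  have hkey := add_pow_lt_pow_mul_one_add_mul hk hlam0 hm0
    ((le_div_iff₀ (mul_pos (by linarith) hm0)).mp hlam1)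
  have hdet : (fromCols H (replicateCol Unit h) * diagonal (Sum.elim l fun _ : Unit => lam) *
      (fromCols H (replicateCol Unit h))ᵀ).det = A.det * (1 + lam * m) := by
    rw [fromCols_replicateCol_mul_diagonal_mul_transpose,
      det_add_replicateCol_mul_replicateRow_eq_dotProduct hpd.det_pos.ne'.isUnit, mulVec_smul,
      dotProduct_smul, smul_eq_mul]
  have htr : trace (diagonal (Sum.elim l fun _ : Unit => lam)) = T + lam := by
    simp [T, trace_diagonal, Fintype.sum_sum_type]
  rw [show (of fun i (_ : Unit) => h i) = replicateCol Unit h from rfl]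
  refine muhat_lt_muhat hx hβ hδ hT (htr ▸ by positivity) hpd.det_pos
    (hdet ▸ mul_pos hpd.det_pos (by positivity)) ?_
  rw [hdet, htr, Fintype.card_fin]
  calc (T + lam) ^ (n_x + n_u) * A.det < T ^ (n_x + n_u) * (1 + lam * m) * A.det :=
        mul_lt_mul_of_pos_right hkey hpd.det_pos
    _ = T ^ (n_x + n_u) * (A.det * (1 + lam * m)) := by ring

/-- With `HΛHᵀ ≻ 0`, `n_h = n_x + n_u ≥ 2`, and `h ∈ ℝ^{n_h}` satisfying
`m := hᵀ(HΛHᵀ)⁻¹h > n_h/tr(Λ)`, for every `0 < λ ≤ (tr(Λ)m − n_h)/((n_h − 1)m)`,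
setting `H₊ := [H h]`, `Λ₊ := diag(Λ, λ)`, one has `μ̂(H₊, Λ₊) < μ̂(H, Λ)`. -/
theorem stmt3 (n_x n_u n : ℕ) (hx : 0 < n_x) (hu : 0 < n_u) (hn : 0 < n)
    (β δ : ℝ) (hβ : 0 < β) (hδ : 0 < δ)
    (H : Matrix (Fin (n_x + n_u)) (Fin n) ℝ)
    (l : Fin n → ℝ) (hl : ∀ i, 0 ≤ l i)
    (hpd : (H * Matrix.diagonal l * Hᵀ).PosDef)
    (h : Fin (n_x + n_u) → ℝ)
    (hm : h ⬝ᵥ (H * Matrix.diagonal l * Hᵀ)⁻¹.mulVec h >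
        ((n_x + n_u : ℕ) : ℝ) / Matrix.trace (Matrix.diagonal l))
    (lam : ℝ) (hlam0 : 0 < lam)
    (hlam1 : lam ≤
        (Matrix.trace (Matrix.diagonal l) *
            (h ⬝ᵥ (H * Matrix.diagonal l * Hᵀ)⁻¹.mulVec h) - ((n_x + n_u : ℕ) : ℝ)) /
          ((((n_x + n_u : ℕ) : ℝ) - 1) *
            (h ⬝ᵥ (H * Matrix.diagonal l * Hᵀ)⁻¹.mulVec h))) :
    muhat n_x β δ (Matrix.fromCols H (Matrix.of fun i (_ : Unit) => h i))
        (Matrix.diagonal (Sum.elim l fun _ : Unit => lam)) <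
      muhat n_x β δ H (Matrix.diagonal l) :=
  stmt3_general n_x n_u n hx hu β δ hβ hδ H l hl hpd h hm lam hlam0 hlam1
end

section
/- Let 𝒞 and 𝒞' be subsets of ℝ^{n_x×n_h} such that {Δ⊤ : Δ ∈ 𝒞} and {Δ⊤ : Δ ∈ 𝒞'} are matrix ellipsoids, and let Δ̄, Δ̄' ∈ ℝ^{n_x×n_h} be such that Δ̄⊤ and (Δ̄')⊤ are their respective centers. Suppose 𝒞' ⊆ 𝒞. Let K ∈ ℝ^{n_u×n_x} and let 𝒳 ⊆ ℝ^{n_x}, 𝒰 ⊆ ℝ^{n_u}, 𝒲 ⊆ ℝ^{n_x} be arbitrary sets. Define V(𝒞) := {(Δ − Δ̄)[x̄; ū] + w : Δ ∈ 𝒞, x̄ ∈ 𝒳, ū ∈ 𝒰, w ∈ 𝒲} and V(𝒞') analogously with center Δ̄', and for a set E ⊆ ℝ^{n_x} define Φ(𝒞, E) := {Δ [I_{n_x}; K] e + v : Δ ∈ 𝒞, e ∈ E, v ∈ V(𝒞)} and Φ(𝒞', E) analogously. Then V(𝒞') ⊆ V(𝒞), and for any sets E' ⊆ E ⊆ ℝ^{n_x}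 one has Φ(𝒞', E') ⊆ Φ(𝒞, E). -/
/-!
A matrix ellipsoid is convex and symmetric about its center. If `S' ⊆ S` are ellipsoids with
centers `c'`, `c` and `z ∈ S'`, then `z` and its translate `z + 2 • (c - c')` (reflect through
`c'`, then through `c`) both lie in `S`, hence so does their midpoint `z + (c - c')`. Applied to
the transposed uncertainty sets, every `Δ' ∈ 𝒞'` has a `Δ ∈ 𝒞` with `Δ - Δ̄ = Δ' - Δ̄'`, which
gives `V(𝒞') ⊆ V(𝒞)`; the inclusion of the `Φ`-sets is then monotonicity.
-/

open Matrix

/-- `S` is a matrix ellipsoid with center `Zc`: for some symmetric `E ≻ 0`, `F`, and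
symmetric `G` with `FᵀE⁻¹F − G ≻ 0`,
`S = {Z : ZᵀEZ + ZᵀF + FᵀZ + G ⪯ 0}` and `Zc = −E⁻¹F`. -/
def IsMatrixEllipsoidWithCenter {p q : Type*} [Fintype p] [Fintype q] [DecidableEq p]
    (S : Set (Matrix p q ℝ)) (Zc : Matrix p q ℝ) : Prop :=
  ∃ (E : Matrix p p ℝ) (F : Matrix p q ℝ) (G : Matrix q q ℝ),
    E.IsHermitian ∧ G.IsHermitian ∧ E.PosDef ∧ (Fᵀ * E⁻¹ * F - G).PosDef ∧
    S = {Z | (-(Zᵀ * E * Z + Zᵀ * F + Fᵀ * Z + G)).PosSemidef} ∧ Zc = -(E⁻¹ * F)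

/-- The uncertainty set `V(𝒞) := {(Δ − Δ̄)[x̄; ū] + w : Δ ∈ 𝒞, x̄ ∈ 𝒳, ū ∈ 𝒰, w ∈ 𝒲}`. -/
def Vset (n_x n_u : ℕ) (X : Set (Fin n_x → ℝ)) (U : Set (Fin n_u → ℝ))
    (W : Set (Fin n_x → ℝ)) (C : Set (Matrix (Fin n_x) (Fin n_x ⊕ Fin n_u) ℝ))
    (Δb : Matrix (Fin n_x) (Fin n_x ⊕ Fin n_u) ℝ) : Set (Fin n_x → ℝ) :=
  {v | ∃ Δ ∈ C, ∃ x ∈ X, ∃ u ∈ U, ∃ w ∈ W, v = (Δ - Δb).mulVec (Sum.elim x u) + w}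

/-- The one-step reachable error set
`Φ(𝒞, E) := {Δ [I; K] e + v : Δ ∈ 𝒞, e ∈ E, v ∈ V(𝒞)}`. -/
def PhiSet (n_x n_u : ℕ) (K : Matrix (Fin n_u) (Fin n_x) ℝ)
    (X : Set (Fin n_x → ℝ)) (U : Set (Fin n_u → ℝ)) (W : Set (Fin n_x → ℝ))
    (C : Set (Matrix (Fin n_x) (Fin n_x ⊕ Fin n_u) ℝ))
    (Δb : Matrix (Fin n_x) (Fin n_x ⊕ Fin n_u) ℝ)
    (E : Set (Fin n_x → ℝ)) : Set (Fin n_x → ℝ) :=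
  {y | ∃ Δ ∈ C, ∃ e ∈ E, ∃ v ∈ Vset n_x n_u X U W C Δb,
    y = Δ.mulVec (Sum.elim e (K.mulVec e)) + v}

theorem Convex.add_sub_mem_of_subset_of_symmetric {V : Type*} [AddCommGroup V] [Module ℝ V]
    {S S' : Set V} {c c' z : V} (hS : Convex ℝ S) (hSc : ∀ y ∈ S, c - y + c ∈ S)
    (hS'c' : ∀ y ∈ S', c' - y + c' ∈ S') (hsub : S' ⊆ S) (hz : z ∈ S') :
    z + (c - c') ∈ S := by
  have hmid := hS (hsub hz) (hSc _ (hsub (hS'c' z hz))) (by norm_num : (0 : ℝ) ≤ 1 / 2)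
    (by norm_num : (0 : ℝ) ≤ 1 / 2) (by norm_num)
  convert hmid using 1
  module

section MatrixEllipsoid

variable {p q : Type*} [Fintype p]

theorem neg_quadratic_eq_sub_transpose_mul_mul [DecidableEq p] {E : Matrix p p ℝ}
    (hE : E.IsHermitian) (hdet : IsUnit E.det) (F : Matrix p q ℝ) (G : Matrix q q ℝ)
    (Z : Matrix p q ℝ) :
    -(Zᵀ * E * Z + Zᵀ * F + Fᵀ * Z + G)
      = (Fᵀ * E⁻¹ * F - G) - (Z + E⁻¹ * F)ᵀ * E * (Z + E⁻¹ * F) := by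
  have hEt : Eᵀ = E := hE.eq
  have hEF : E * (E⁻¹ * F) = F := by
    rw [← Matrix.mul_assoc, mul_nonsing_inv E hdet, Matrix.one_mul]
  have hFE : (E⁻¹ * F)ᵀ * E = Fᵀ := by
    rw [transpose_mul, Matrix.mul_assoc, transpose_nonsing_inv, hEt, nonsing_inv_mul E hdet,
      Matrix.mul_one]
  simp only [transpose_add, Matrix.add_mul, Matrix.mul_add, hFE, Matrix.mul_assoc, hEF]
  abel

theorem IsMatrixEllipsoidWithCenter.exists_eq_setOf [Fintype q] [DecidableEq p]
    {S : Set (Matrix p q ℝ)} {c : Matrix p q ℝ} (h : IsMatrixEllipsoidWithCenter S c) :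
    ∃ (E : Matrix p p ℝ) (D : Matrix q q ℝ),
      E.PosSemidef ∧ S = {Z | (D - (Z - c)ᵀ * E * (Z - c)).PosSemidef} := by
  obtain ⟨E, F, G, hE, -, hEpos, -, rfl, rfl⟩ := h
  refine ⟨E, Fᵀ * E⁻¹ * F - G, hEpos.posSemidef, ?_⟩
  simp only [sub_neg_eq_add,
    neg_quadratic_eq_sub_transpose_mul_mul hE ((isUnit_iff_isUnit_det E).1 hEpos.isUnit) F G]

theorem sub_transpose_mul_mul_smul_add_smul {E : Matrix p p ℝ} (D : Matrix q q ℝ)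
    (P Q : Matrix p q ℝ) {a b : ℝ} (hab : a + b = 1) :
    D - (a • P + b • Q)ᵀ * E * (a • P + b • Q)
      = a • (D - Pᵀ * E * P) + b • (D - Qᵀ * E * Q) + (a * b) • ((P - Q)ᵀ * E * (P - Q)) := by
  obtain rfl : b = 1 - a := by linarith
  simp only [transpose_add, transpose_sub, transpose_smul, Matrix.add_mul, Matrix.mul_add,
    Matrix.sub_mul, Matrix.mul_sub, Matrix.smul_mul, Matrix.mul_smul, smul_sub, smul_add,
    smul_smul]
  module

theorem convex_setOf_posSemidef_sub_transpose_mul_mul [Fintype q] {E : Matrix p p ℝ}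
    (hE : E.PosSemidef) (D : Matrix q q ℝ) (c : Matrix p q ℝ) :
    Convex ℝ {Z | (D - (Z - c)ᵀ * E * (Z - c)).PosSemidef} := by
  intro A hA B hB a b ha hb hab
  have hcomb : a • A + b • B - c = a • (A - c) + b • (B - c) := by
    rw [smul_sub, smul_sub, sub_add_sub_comm, ← add_smul, hab, one_smul]
  show PosSemidef _
  rw [hcomb, sub_transpose_mul_mul_smul_add_smul D _ _ hab, sub_sub_sub_cancel_right]
  exact ((hA.smul ha).add (hB.smul hb)).add
    ((hE.conjTranspose_mul_mul_same (A - B)).smul (mul_nonneg ha hb))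

theorem IsMatrixEllipsoidWithCenter.sub_add_mem [Fintype q] [DecidableEq p]
    {S : Set (Matrix p q ℝ)} {c : Matrix p q ℝ} (hS : IsMatrixEllipsoidWithCenter S c) :
    ∀ y ∈ S, c - y + c ∈ S := by
  intro y hy
  obtain ⟨E, D, -, rfl⟩ := hS.exists_eq_setOf
  have : c - y + c - c = -(y - c) := by abel
  simpa only [Set.mem_ofPred_eq, this, transpose_neg, Matrix.neg_mul, Matrix.mul_neg, neg_neg]
    using hy

theorem IsMatrixEllipsoidWithCenter.add_sub_mem_of_subset [Fintype q] [DecidableEq p]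
    {S S' : Set (Matrix p q ℝ)} {c c' z : Matrix p q ℝ} (hS : IsMatrixEllipsoidWithCenter S c)
    (hS' : IsMatrixEllipsoidWithCenter S' c') (hsub : S' ⊆ S) (hz : z ∈ S') :
    z + (c - c') ∈ S := by
  obtain ⟨E, D, hE, hSeq⟩ := hS.exists_eq_setOf
  refine Convex.add_sub_mem_of_subset_of_symmetric ?_ hS.sub_add_mem hS'.sub_add_mem hsub hz
  exact hSeq ▸ convex_setOf_posSemidef_sub_transpose_mul_mul hE D c

end MatrixEllipsoid

theorem Vset_subset_Vset {n_x n_u : ℕ} {X : Set (Fin n_x → ℝ)} {U : Set (Fin n_u → ℝ)}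
    {W : Set (Fin n_x → ℝ)} {C C' : Set (Matrix (Fin n_x) (Fin n_x ⊕ Fin n_u) ℝ)}
    {Δb Δb' : Matrix (Fin n_x) (Fin n_x ⊕ Fin n_u) ℝ}
    (h : ∀ Δ' ∈ C', ∃ Δ ∈ C, Δ - Δb = Δ' - Δb') :
    Vset n_x n_u X U W C' Δb' ⊆ Vset n_x n_u X U W C Δb := by
  rintro v ⟨Δ', hΔ', x, hx, u, hu, w, hw, rfl⟩
  obtain ⟨Δ, hΔ, hEq⟩ := h Δ' hΔ'
  exact ⟨Δ, hΔ, x, hx, u, hu, w, hw, by rw [hEq]⟩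

theorem PhiSet_subset_PhiSet {n_x n_u : ℕ} {K : Matrix (Fin n_u) (Fin n_x) ℝ}
    {X : Set (Fin n_x → ℝ)} {U : Set (Fin n_u → ℝ)} {W : Set (Fin n_x → ℝ)}
    {C C' : Set (Matrix (Fin n_x) (Fin n_x ⊕ Fin n_u) ℝ)}
    {Δb Δb' : Matrix (Fin n_x) (Fin n_x ⊕ Fin n_u) ℝ} {E E' : Set (Fin n_x → ℝ)}
    (hC : C' ⊆ C) (hE : E' ⊆ E) (hV : Vset n_x n_u X U W C' Δb' ⊆ Vset n_x n_u X U W C Δb) :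
    PhiSet n_x n_u K X U W C' Δb' E' ⊆ PhiSet n_x n_u K X U W C Δb E := by
  rintro y ⟨Δ, hΔ, e, he, v, hv, rfl⟩
  exact ⟨Δ, hC hΔ, e, hE he, v, hV hv, rfl⟩

theorem stmt17_general (n_x n_u : ℕ)
    (C C' : Set (Matrix (Fin n_x) (Fin n_x ⊕ Fin n_u) ℝ))
    (Δb Δb' : Matrix (Fin n_x) (Fin n_x ⊕ Fin n_u) ℝ)
    (hC : IsMatrixEllipsoidWithCenter ((fun Δ => Δᵀ) '' C) Δbᵀ)
    (hC' : IsMatrixEllipsoidWithCenter ((fun Δ => Δᵀ) '' C') Δb'ᵀ)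
    (hsub : C' ⊆ C)
    (K : Matrix (Fin n_u) (Fin n_x) ℝ)
    (X : Set (Fin n_x → ℝ)) (U : Set (Fin n_u → ℝ)) (W : Set (Fin n_x → ℝ)) :
    Vset n_x n_u X U W C' Δb' ⊆ Vset n_x n_u X U W C Δb ∧
    ∀ E' E : Set (Fin n_x → ℝ), E' ⊆ E →
      PhiSet n_x n_u K X U W C' Δb' E' ⊆ PhiSet n_x n_u K X U W C Δb E := by
  have hshift : ∀ Δ' ∈ C', ∃ Δ ∈ C, Δ - Δb = Δ' - Δb' := by
    intro Δ' hΔ'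
    obtain ⟨Δ, hΔ, hΔt : Δᵀ = Δ'ᵀ + (Δbᵀ - Δb'ᵀ)⟩ :=
      hC.add_sub_mem_of_subset hC' (Set.image_mono hsub) ⟨Δ', hΔ', rfl⟩
    refine ⟨Δ, hΔ, transpose_injective ?_⟩
    rw [transpose_sub, transpose_sub, hΔt]
    abel
  have hV : Vset n_x n_u X U W C' Δb' ⊆ Vset n_x n_u X U W C Δb := Vset_subset_Vset hshift
  exact ⟨hV, fun E' E hE => PhiSet_subset_PhiSet hsub hE hV⟩

/-- If `𝒞' ⊆ 𝒞` are sets whose transposed copies are matrix ellipsoids with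
(transposed) centers `Δ̄'`, `Δ̄`, then `V(𝒞') ⊆ V(𝒞)`, and for any `E' ⊆ E`,
`Φ(𝒞', E') ⊆ Φ(𝒞, E)`. -/
theorem stmt17 (n_x n_u : ℕ) (hx : 0 < n_x) (hu : 0 < n_u)
    (C C' : Set (Matrix (Fin n_x) (Fin n_x ⊕ Fin n_u) ℝ))
    (Δb Δb' : Matrix (Fin n_x) (Fin n_x ⊕ Fin n_u) ℝ)
    (hC : IsMatrixEllipsoidWithCenter ((fun Δ => Δᵀ) '' C) Δbᵀ)
    (hC' : IsMatrixEllipsoidWithCenter ((fun Δ => Δᵀ) '' C') Δb'ᵀ)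
    (hsub : C' ⊆ C)
    (K : Matrix (Fin n_u) (Fin n_x) ℝ)
    (X : Set (Fin n_x → ℝ)) (U : Set (Fin n_u → ℝ)) (W : Set (Fin n_x → ℝ)) :
    Vset n_x n_u X U W C' Δb' ⊆ Vset n_x n_u X U W C Δb ∧
    ∀ E' E : Set (Fin n_x → ℝ), E' ⊆ E →
      PhiSet n_x n_u K X U W C' Δb' E' ⊆ PhiSet n_x n_u K X U W C Δb E :=
  stmt17_general n_x n_u C C' Δb Δb' hC hC' hsub K X U W
end
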